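/- arXiv:2403.08951 — 4 statements merged into one kernel-verified Lean document; each statement's English description precedes it below -/
import Mathlib

section
/- There exists a constant κ > 0 such that for every admissible function u : [0,1] → ℂ (continuously differentiable with u(0) = u(1) = 0), the one-dimensional Gagliardo–Nirenberg inequality holds: ∫₀¹ |u(x)|⁴ dx ≤ (1/4) ∫₀¹ |u'(x)|² dx + (κ/2) (∫₀¹ |u(x)|² dx)³. -/
/-!
Since `u 0 = 0`, the fundamental theorem of calculus applied to `‖u‖²` gives
`sup ‖u‖² ≤ M := ∫₀¹ 2‖u‖‖u'‖`, hence `‖u‖₄⁴ ≤ M ‖u‖₂²`. Young's inequality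
`2 (2A‖u‖) (‖u'‖/2) ≤ 4A²‖u‖² + ‖u'‖²/4` with `A = ‖u‖₂²` then bounds `M A` by
`‖u'‖₂²/4 + 4A³`, which is the claim with `κ = 8`.
-/

open intervalIntegral Set

def Admissible (u u' : ℝ → ℂ) : Prop :=
  (∀ x ∈ Set.Icc (0:ℝ) 1, HasDerivAt u (u' x) x) ∧
    ContinuousOn u' (Set.Icc (0:ℝ) 1) ∧ u 0 = 0 ∧ u 1 = 0

section

variable {a b : ℝ}

theorem sq_norm_le_integral_two_mul_norm_mul_norm {E : Type*} [NormedAddCommGroup E]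
    [InnerProductSpace ℝ E] {u u' : ℝ → E} (hu : ∀ x ∈ Icc a b, HasDerivAt u (u' x) x)
    (hu' : ContinuousOn u' (Icc a b)) (ha : u a = 0) {x : ℝ} (hx : x ∈ Icc a b) :
    ‖u x‖ ^ 2 ≤ ∫ t in a..b, 2 * ‖u t‖ * ‖u' t‖ := by
  have hsub : Icc a x ⊆ Icc a b := Icc_subset_Icc le_rfl hx.2
  have hcu : ContinuousOn u (Icc a b) := fun t ht => (hu t ht).continuousAt.continuousWithinAt
  have hbound : ContinuousOn (fun t => 2 * ‖u t‖ * ‖u' t‖) (Icc a b) := by fun_prop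
  have hinner : ContinuousOn (fun t => 2 * inner ℝ (u t) (u' t)) (Icc a x) :=
    continuousOn_const.mul ((hcu.mono hsub).inner (hu'.mono hsub))
  calc ‖u x‖ ^ 2 = ∫ t in a..x, 2 * inner ℝ (u t) (u' t) := by
        rw [integral_eq_sub_of_hasDerivAt
          (fun t ht => (hu t (hsub (uIcc_of_le hx.1 ▸ ht))).norm_sq)
          (hinner.intervalIntegrable_of_Icc hx.1), ha, norm_zero]
        ring
    _ ≤ ∫ t in a..x, 2 * ‖u t‖ * ‖u' t‖ := by
        refine integral_mono_on hx.1 (hinner.intervalIntegrable_of_Icc hx.1)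
          ((hbound.mono hsub).intervalIntegrable_of_Icc hx.1) fun t _ => ?_
        rw [mul_assoc]
        exact mul_le_mul_of_nonneg_left (real_inner_le_norm _ _) zero_le_two
    _ ≤ ∫ t in a..b, 2 * ‖u t‖ * ‖u' t‖ :=
        integral_mono_interval le_rfl hx.1 hx.2
          (Filter.Eventually.of_forall fun t => by positivity)
          (hbound.intervalIntegrable_of_Icc (hx.1.trans hx.2))

theorem integral_sq_le_mul_integral_of_le {g : ℝ → ℝ} {M : ℝ} (hab : a ≤ b)
    (hg : ContinuousOn g (Icc a b)) (hg₀ : ∀ x ∈ Icc a b, 0 ≤ g x)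
    (hgM : ∀ x ∈ Icc a b, g x ≤ M) :
    ∫ x in a..b, g x ^ 2 ≤ M * ∫ x in a..b, g x := by
  rw [← integral_const_mul]
  refine integral_mono_on hab (by apply ContinuousOn.intervalIntegrable_of_Icc hab; fun_prop)
    ((continuousOn_const.mul hg).intervalIntegrable_of_Icc hab) fun x hx => ?_
  rw [sq]
  exact mul_le_mul_of_nonneg_right (hgM x hx) (hg₀ x hx)

theorem mul_integral_two_mul_le {f g : ℝ → ℝ} (hab : a ≤ b) (hf : ContinuousOn f (Icc a b))
    (hg : ContinuousOn g (Icc a b)) (c d : ℝ) :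
    c * d * ∫ x in a..b, 2 * f x * g x ≤
      c ^ 2 * (∫ x in a..b, f x ^ 2) + d ^ 2 * ∫ x in a..b, g x ^ 2 := by
  rw [← integral_const_mul, ← integral_const_mul, ← integral_const_mul,
    ← integral_add (by apply ContinuousOn.intervalIntegrable_of_Icc hab; fun_prop)
      (by apply ContinuousOn.intervalIntegrable_of_Icc hab; fun_prop)]
  refine integral_mono_on hab (by apply ContinuousOn.intervalIntegrable_of_Icc hab; fun_prop)
    (by apply ContinuousOn.intervalIntegrable_of_Icc hab; fun_prop) fun x _ => ?_
  nlinarith [sq_nonneg (c * f x - d * g x)]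

end

/-- One-dimensional Gagliardo–Nirenberg inequality:
`‖u‖₄⁴ ≤ (1/4)‖u'‖₂² + (κ/2)(‖u‖₂²)³` for all admissible `u`. -/
theorem gagliardo_nirenberg_dim_one :
    ∃ κ : ℝ, 0 < κ ∧
      ∀ u u' : ℝ → ℂ, Admissible u u' →
        (∫ x in (0:ℝ)..1, ‖u x‖ ^ 4) ≤
          (1 / 4) * (∫ x in (0:ℝ)..1, ‖u' x‖ ^ 2) +
            (κ / 2) * (∫ x in (0:ℝ)..1, ‖u x‖ ^ 2) ^ 3 := by
  refine ⟨8, by norm_num, ?_⟩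
  rintro u u' ⟨hu, hu', hu₀, -⟩
  have hcu : ContinuousOn u (Icc 0 1) := fun t ht => (hu t ht).continuousAt.continuousWithinAt
  set A := ∫ x in (0:ℝ)..1, ‖u x‖ ^ 2
  set M := ∫ x in (0:ℝ)..1, 2 * ‖u x‖ * ‖u' x‖
  have hL4 : ∫ x in (0:ℝ)..1, ‖u x‖ ^ 4 ≤ M * A := by
    simpa only [← pow_mul] using
      integral_sq_le_mul_integral_of_le (g := fun x => ‖u x‖ ^ 2) zero_le_one (by fun_prop)
        (fun x _ => sq_nonneg _)
        (fun x hx => sq_norm_le_integral_two_mul_norm_mul_norm hu hu' hu₀ hx)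
  calc ∫ x in (0:ℝ)..1, ‖u x‖ ^ 4 ≤ M * A := hL4
    _ = 2 * A * (1 / 2) * M := by ring
    _ ≤ (2 * A) ^ 2 * A + (1 / 2) ^ 2 * ∫ x in (0:ℝ)..1, ‖u' x‖ ^ 2 :=
        mul_integral_two_mul_le zero_le_one hcu.norm hu'.norm (2 * A) (1 / 2)
    _ = _ := by ring
end

section
/- For every admissible function u : [0,1] → ℂ (continuously differentiable with u(0) = u(1) = 0), one has the one-dimensional interpolation inequality ∫₀¹ |u(x)|⁶ dx ≤ 4 (∫₀¹ |u'(x)|² dx) (∫₀¹ |u(x)|² dx)². -/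
/-!
Since `u 0 = 0`, for `x ∈ [0,1]` we have `‖u x‖² = ∫₀ˣ 2⟪u, u'⟫ ≤ 2 ∫₀¹ ‖u‖ ‖u'‖ =: 2S`, and
Cauchy–Schwarz gives `S² ≤ ‖u‖₂² ‖u'‖₂²`. Hence
`∫₀¹ ‖u‖⁶ ≤ (sup ‖u‖²)² ∫₀¹ ‖u‖² ≤ 4 S² ‖u‖₂² ≤ 4 ‖u'‖₂² (‖u‖₂²)²`.
-/

open MeasureTheory intervalIntegral

open Set

theorem sq_integral_mul_le_integral_sq_mul_integral_sq {α : Type*} [MeasurableSpace α]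
    {μ : Measure α} {f g : α → ℝ} (hf : Integrable (fun x => f x ^ 2) μ)
    (hg : Integrable (fun x => g x ^ 2) μ) (hfg : Integrable (fun x => f x * g x) μ) :
    (∫ x, f x * g x ∂μ) ^ 2 ≤ (∫ x, f x ^ 2 ∂μ) * ∫ x, g x ^ 2 ∂μ := by
  have hquadratic : ∀ t : ℝ,
      0 ≤ (∫ x, f x ^ 2 ∂μ) * (t * t) + (2 * ∫ x, f x * g x ∂μ) * t + ∫ x, g x ^ 2 ∂μ := by
    intro t
    have hexpand : (fun x => (t * f x + g x) ^ 2)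
        = fun x => t ^ 2 * f x ^ 2 + (2 * t * (f x * g x) + g x ^ 2) := by
      funext x; ring
    have hnonneg : 0 ≤ ∫ x, (t * f x + g x) ^ 2 ∂μ := integral_nonneg fun x => sq_nonneg _
    have hcross : Integrable (fun x => 2 * t * (f x * g x) + g x ^ 2) μ :=
      (hfg.const_mul _).add hg
    rw [hexpand, integral_add (hf.const_mul _) hcross, integral_add (hfg.const_mul _) hg,
      MeasureTheory.integral_const_mul, MeasureTheory.integral_const_mul] at hnonneg
    linarith
  have hdiscrim := discrim_le_zero hquadratic
  rw [discrim] at hdiscrim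
  linarith

theorem norm_sq_le_two_mul_integral_norm_mul_norm_deriv {E : Type*} [NormedAddCommGroup E]
    [InnerProductSpace ℝ E] {u u' : ℝ → E} {a b x : ℝ}
    (hderiv : ∀ t ∈ Icc a b, HasDerivAt u (u' t) t) (hu' : ContinuousOn u' (Icc a b))
    (ha : u a = 0) (hx : x ∈ Icc a b) :
    ‖u x‖ ^ 2 ≤ 2 * ∫ t in a..b, ‖u t‖ * ‖u' t‖ := by
  have hu : ContinuousOn u (Icc a b) := fun t ht =>
    (hderiv t ht).continuousAt.continuousWithinAt
  have hsub : uIcc a x ⊆ Icc a b := by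
    rw [uIcc_of_le hx.1]; exact Icc_subset_Icc le_rfl hx.2
  have hinner : IntervalIntegrable (fun t => 2 * inner ℝ (u t) (u' t)) volume a x :=
    ((hu.inner hu').mono hsub).intervalIntegrable.const_mul 2
  have hbound : IntervalIntegrable (fun t => 2 * (‖u t‖ * ‖u' t‖)) volume a b :=
    ((hu.norm.mul hu'.norm).intervalIntegrable_of_Icc (hx.1.trans hx.2)).const_mul 2
  have hftc : ∫ t in a..x, 2 * inner ℝ (u t) (u' t) = ‖u x‖ ^ 2 - ‖u a‖ ^ 2 :=
    integral_eq_sub_of_hasDerivAt (fun t ht => (hderiv t (hsub ht)).norm_sq) hinner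
  calc ‖u x‖ ^ 2 = ∫ t in a..x, 2 * inner ℝ (u t) (u' t) := by simp [hftc, ha]
    _ ≤ ∫ t in a..x, 2 * (‖u t‖ * ‖u' t‖) := by
      refine integral_mono_on hx.1 hinner
        (hbound.mono_set (uIcc_subset_uIcc_left (mem_uIcc_of_le hx.1 hx.2))) fun t _ => ?_
      gcongr
      exact real_inner_le_norm _ _
    _ ≤ ∫ t in a..b, 2 * (‖u t‖ * ‖u' t‖) :=
      integral_mono_interval le_rfl hx.1 hx.2 (Filter.Eventually.of_forall fun t => by positivity)
        hbound
    _ = 2 * ∫ t in a..b, ‖u t‖ * ‖u' t‖ := integral_const_mul _ _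

/-- One-dimensional Gagliardo–Nirenberg interpolation:
`‖u‖₆⁶ ≤ 4 ‖u'‖₂² (‖u‖₂²)²` for all admissible `u`. -/
theorem L6_interpolation (u u' : ℝ → ℂ) (hu : Admissible u u') :
    (∫ x in (0:ℝ)..1, ‖u x‖ ^ 6)
      ≤ 4 * (∫ x in (0:ℝ)..1, ‖u' x‖ ^ 2) * (∫ x in (0:ℝ)..1, ‖u x‖ ^ 2) ^ 2 := by
  obtain ⟨hderiv, hu', hu0, -⟩ := hu
  have hu : ContinuousOn u (Icc 0 1) := fun t ht =>
    (hderiv t ht).continuousAt.continuousWithinAt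
  set A := ∫ x in (0:ℝ)..1, ‖u' x‖ ^ 2
  set B := ∫ x in (0:ℝ)..1, ‖u x‖ ^ 2
  set S := ∫ x in (0:ℝ)..1, ‖u x‖ * ‖u' x‖
  have hB : 0 ≤ B := integral_nonneg zero_le_one fun x _ => by positivity
  have hCS : S ^ 2 ≤ B * A := by
    have hint : ∀ {f : ℝ → ℝ}, ContinuousOn f (Icc 0 1) → IntegrableOn f (Ioc 0 1) :=
      fun hf => hf.integrableOn_Icc.mono_set Ioc_subset_Icc_self
    simp only [S, A, B, integral_of_le zero_le_one]
    exact sq_integral_mul_le_integral_sq_mul_integral_sq (hint (hu.norm.pow 2))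
      (hint (hu'.norm.pow 2)) (hint (hu.norm.mul hu'.norm))
  calc ∫ x in (0:ℝ)..1, ‖u x‖ ^ 6 ≤ ∫ x in (0:ℝ)..1, (2 * S) ^ 2 * ‖u x‖ ^ 2 := by
        refine integral_mono_on zero_le_one ?_ ?_ fun x hx => ?_
        · exact (hu.norm.pow 6).intervalIntegrable_of_Icc zero_le_one
        · exact ((hu.norm.pow 2).intervalIntegrable_of_Icc zero_le_one).const_mul _
        · rw [show ‖u x‖ ^ 6 = (‖u x‖ ^ 2) ^ 2 * ‖u x‖ ^ 2 by ring]
          gcongr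
          exact norm_sq_le_two_mul_integral_norm_mul_norm_deriv hderiv hu' hu0 hx
    _ = (2 * S) ^ 2 * B := intervalIntegral.integral_const_mul _ _
    _ ≤ 4 * A * B ^ 2 := by nlinarith
end

section
/- There exists a constant κ₂ > 0 such that for all admissible u₁, u₂ : [0,1] → ℂ one has the cross-term bound |Re ∫₀¹ u₁(x) u₂(x) (conj(u₁(x)) − conj(u₂(x)))² dx| ≤ (1/2) κ₂ (Φ(u₁) + Φ(u₂)) ∫₀¹ |u₁(x) − u₂(x)|² dx. -/
/-! Since `u 0 = 0`, the fundamental theorem of calculus and Cauchy–Schwarz give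
`‖u x‖² ≤ ‖u'‖₂²` on `[0,1]`, while the Gagliardo–Nirenberg hypothesis gives
`Φ(u) ≥ ‖u'‖₂² / 2`. Hence `‖u₁ x‖ ‖u₂ x‖ ≤ (‖u₁'‖₂² + ‖u₂'‖₂²) / 2 ≤ Φ(u₁) + Φ(u₂)` pointwise, and
since the integrand has modulus `‖u₁‖ ‖u₂‖ ‖u₁ - u₂‖²`, the bound holds with `κ₂ = 2`. -/

open MeasureTheory intervalIntegral

noncomputable def Phi (κ : ℝ) (u u' : ℝ → ℂ) : ℝ :=
  (∫ x in (0:ℝ)..1, ‖u' x‖ ^ 2) - (1 / 2) * (∫ x in (0:ℝ)..1, ‖u x‖ ^ 4)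
    + κ * (∫ x in (0:ℝ)..1, ‖u x‖ ^ 2) ^ 3 + κ * (∫ x in (0:ℝ)..1, ‖u x‖ ^ 2) ^ 9

theorem sq_intervalIntegral_le_mul_intervalIntegral_sq {g : ℝ → ℝ} {a b : ℝ} (hab : a ≤ b)
    (hg : ContinuousOn g (Set.Icc a b)) :
    (∫ t in a..b, g t) ^ 2 ≤ (b - a) * ∫ t in a..b, g t ^ 2 := by
  set A := ∫ t in a..b, g t
  set D := ∫ t in a..b, g t ^ 2
  have hg₁ : IntervalIntegrable g volume a b := hg.intervalIntegrable_of_Icc hab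
  have hg₂ : IntervalIntegrable (fun t => g t ^ 2) volume a b :=
    (hg.pow 2).intervalIntegrable_of_Icc hab
  have hexpand : ∫ t in a..b, ((b - a) * g t - A) ^ 2 = (b - a) * ((b - a) * D - A ^ 2) := by
    have : ∀ t, ((b - a) * g t - A) ^ 2 = (b - a) ^ 2 * g t ^ 2 - 2 * (b - a) * A * g t + A ^ 2 :=
      fun t => by ring
    simp_rw [this]
    rw [intervalIntegral.integral_add ((hg₂.const_mul _).sub (hg₁.const_mul _))
        intervalIntegrable_const,
      intervalIntegral.integral_sub (hg₂.const_mul _) (hg₁.const_mul _),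
      intervalIntegral.integral_const_mul, intervalIntegral.integral_const_mul,
      intervalIntegral.integral_const, smul_eq_mul]
    ring
  have hnonneg : 0 ≤ (b - a) * ((b - a) * D - A ^ 2) :=
    hexpand ▸ intervalIntegral.integral_nonneg hab fun _ _ => sq_nonneg _
  rcases hab.eq_or_lt with rfl | hlt
  · simp [A]
  · linarith [(mul_nonneg_iff_of_pos_left (sub_pos.mpr hlt)).mp hnonneg]

theorem norm_le_intervalIntegral_norm_deriv {E : Type*} [NormedAddCommGroup E] [NormedSpace ℝ E]
    [CompleteSpace E] {f f' : ℝ → E} {a b x : ℝ}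
    (hf : ∀ t ∈ Set.Icc a b, HasDerivAt f (f' t) t) (hf' : ContinuousOn f' (Set.Icc a b))
    (ha : f a = 0) (hx : x ∈ Set.Icc a b) :
    ‖f x‖ ≤ ∫ t in a..b, ‖f' t‖ := by
  have hsub : Set.Icc a x ⊆ Set.Icc a b := Set.Icc_subset_Icc_right hx.2
  have hftc : ∫ t in a..x, f' t = f x := by
    rw [integral_eq_sub_of_hasDerivAt (fun t ht => hf t (hsub (Set.uIcc_of_le hx.1 ▸ ht)))
      ((hf'.mono hsub).intervalIntegrable_of_Icc hx.1), ha, sub_zero]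
  calc ‖f x‖ = ‖∫ t in a..x, f' t‖ := by rw [hftc]
    _ ≤ ∫ t in a..x, ‖f' t‖ := norm_integral_le_integral_norm hx.1
    _ ≤ ∫ t in a..b, ‖f' t‖ :=
      integral_mono_interval le_rfl hx.1 hx.2 (.of_forall fun _ => norm_nonneg _)
        (hf'.norm.intervalIntegrable_of_Icc (hx.1.trans hx.2))

theorem Complex.norm_mul_mul_conj_sub_conj_sq (z w : ℂ) :
    ‖z * w * (starRingEnd ℂ z - starRingEnd ℂ w) ^ 2‖ = ‖z‖ * ‖w‖ * ‖z - w‖ ^ 2 := by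
  rw [← map_sub, norm_mul, norm_mul, norm_pow, Complex.norm_conj]

namespace Admissible

variable {u u' : ℝ → ℂ}

theorem continuousOn (h : Admissible u u') : ContinuousOn u (Set.Icc 0 1) :=
  fun x hx => (h.1 x hx).continuousAt.continuousWithinAt

theorem norm_sq_le_integral_norm_deriv_sq (h : Admissible u u') {x : ℝ}
    (hx : x ∈ Set.Icc (0 : ℝ) 1) :
    ‖u x‖ ^ 2 ≤ ∫ t in (0 : ℝ)..1, ‖u' t‖ ^ 2 :=
  calc ‖u x‖ ^ 2 ≤ (∫ t in (0 : ℝ)..1, ‖u' t‖) ^ 2 :=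
        pow_le_pow_left₀ (norm_nonneg _)
          (norm_le_intervalIntegral_norm_deriv h.1 h.2.1 h.2.2.1 hx) 2
    _ ≤ (1 - 0) * ∫ t in (0 : ℝ)..1, ‖u' t‖ ^ 2 :=
        sq_intervalIntegral_le_mul_intervalIntegral_sq zero_le_one h.2.1.norm
    _ = ∫ t in (0 : ℝ)..1, ‖u' t‖ ^ 2 := by rw [sub_zero, one_mul]

end Admissible

theorem half_integral_norm_deriv_sq_le_Phi {κ : ℝ} (hκ : 0 ≤ κ) {u u' : ℝ → ℂ}
    (hGN : (∫ x in (0:ℝ)..1, ‖u x‖ ^ 4) ≤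
      (1 / 4) * (∫ x in (0:ℝ)..1, ‖u' x‖ ^ 2) + (κ / 2) * (∫ x in (0:ℝ)..1, ‖u x‖ ^ 2) ^ 3) :
    (1 / 2) * ∫ x in (0:ℝ)..1, ‖u' x‖ ^ 2 ≤ Phi κ u u' := by
  have hD : 0 ≤ ∫ x in (0:ℝ)..1, ‖u' x‖ ^ 2 :=
    intervalIntegral.integral_nonneg zero_le_one fun _ _ => by positivity
  have hM : 0 ≤ ∫ x in (0:ℝ)..1, ‖u x‖ ^ 2 :=
    intervalIntegral.integral_nonneg zero_le_one fun _ _ => by positivity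
  unfold Phi
  linarith [mul_nonneg hκ (pow_nonneg hM 3), mul_nonneg hκ (pow_nonneg hM 9)]

/-- Cross-term bound: there is `κ₂ > 0` so that for all admissible `u₁, u₂`,
`|Re ∫ u₁ u₂ (conj u₁ − conj u₂)²| ≤ (1/2) κ₂ (Φ(u₁) + Φ(u₂)) ∫ |u₁ − u₂|²`. -/
theorem cross_term_bound (κ : ℝ) (hκ : 0 < κ)
    (hGN : ∀ u u' : ℝ → ℂ, Admissible u u' →
      (∫ x in (0:ℝ)..1, ‖u x‖ ^ 4) ≤
        (1 / 4) * (∫ x in (0:ℝ)..1, ‖u' x‖ ^ 2) +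
          (κ / 2) * (∫ x in (0:ℝ)..1, ‖u x‖ ^ 2) ^ 3) :
    ∃ κ₂ : ℝ, 0 < κ₂ ∧
      ∀ u₁ u₁' u₂ u₂' : ℝ → ℂ, Admissible u₁ u₁' → Admissible u₂ u₂' →
        |(∫ x in (0:ℝ)..1,
            u₁ x * u₂ x * ((starRingEnd ℂ) (u₁ x) - (starRingEnd ℂ) (u₂ x)) ^ 2).re|
          ≤ (1 / 2) * κ₂ * (Phi κ u₁ u₁' + Phi κ u₂ u₂') *
              (∫ x in (0:ℝ)..1, ‖u₁ x - u₂ x‖ ^ 2) := by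
  refine ⟨2, two_pos, fun u₁ u₁' u₂ u₂' h₁ h₂ => ?_⟩
  set C := Phi κ u₁ u₁' + Phi κ u₂ u₂'
  have hsup : ∀ x ∈ Set.Icc (0 : ℝ) 1, ‖u₁ x‖ * ‖u₂ x‖ ≤ C := fun x hx => by
    linarith [sq_nonneg (‖u₁ x‖ - ‖u₂ x‖), h₁.norm_sq_le_integral_norm_deriv_sq hx,
      h₂.norm_sq_le_integral_norm_deriv_sq hx,
      half_integral_norm_deriv_sq_le_Phi hκ.le (hGN _ _ h₁),
      half_integral_norm_deriv_sq_le_Phi hκ.le (hGN _ _ h₂)]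
  have hc₁ := h₁.continuousOn
  have hc₂ := h₂.continuousOn
  calc _ ≤ ‖∫ x in (0:ℝ)..1, u₁ x * u₂ x * ((starRingEnd ℂ) (u₁ x) - (starRingEnd ℂ) (u₂ x)) ^ 2‖ :=
        Complex.abs_re_le_norm _
    _ ≤ ∫ x in (0:ℝ)..1, ‖u₁ x * u₂ x * ((starRingEnd ℂ) (u₁ x) - (starRingEnd ℂ) (u₂ x)) ^ 2‖ :=
        intervalIntegral.norm_integral_le_integral_norm zero_le_one
    _ ≤ ∫ x in (0:ℝ)..1, C * ‖u₁ x - u₂ x‖ ^ 2 := by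
        refine intervalIntegral.integral_mono_on zero_le_one ?_ ?_ fun x hx => ?_
        · exact ((hc₁.mul hc₂).mul ((hc₁.star.sub hc₂.star).pow 2)).norm.intervalIntegrable_of_Icc
            zero_le_one
        · exact (((hc₁.sub hc₂).norm.pow 2).const_smul C).intervalIntegrable_of_Icc zero_le_one
        · rw [Complex.norm_mul_mul_conj_sub_conj_sq]
          exact mul_le_mul_of_nonneg_right (hsup x hx) (sq_nonneg _)
    _ = (1 / 2) * 2 * C * ∫ x in (0:ℝ)..1, ‖u₁ x - u₂ x‖ ^ 2 := by
        rw [intervalIntegral.integral_const_mul]; ring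
end

section
/- Let H be a normed vector space equipped with its Borel σ-algebra, ξ > 0, and define d₀(u,v) = min(‖u − v‖, 1) and d₀^ξ(u,v) = √( d₀(u,v) · (1 + e^{ξ‖u‖²} + e^{ξ‖v‖²}) ). Then for all Borel probability measures μ, ν on H, the Wasserstein-type quantities (defined as infima of ∫ d dπ over couplings π of (μ,ν), with values in [0,∞]) satisfy W_{d₀^ξ}(μ, ν)² ≤ W_{d₀}(μ, ν) · (1 + ∫_H e^{ξ‖u‖²} μ(du) + ∫_H e^{ξ‖u‖²} ν(du)). -/
/-!
For a coupling `π` of `(μ, ν)`, Cauchy–Schwarz gives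
`(∫ √(d₀ g) dπ)² ≤ (∫ d₀ dπ) (∫ g dπ)` with `g(u, v) = 1 + e^{ξ‖u‖²} + e^{ξ‖v‖²}`, and
`∫ g dπ = 1 + ∫ e^{ξ‖u‖²} dμ + ∫ e^{ξ‖u‖²} dν` only depends on the marginals; taking the
infimum over `π` gives the claim. Since `0 * ∞ = 0` in `[0, ∞]`, this leaves the case of an
infinite exponential moment and `W_{d₀}(μ, ν) = 0`. There `μ = ν`: `d₀` controls the increments
of bounded Lipschitz functions, so `μ` and `ν` integrate all thickened indicators of closed sets
alike. Then the diagonal coupling shows `W_{d₀^ξ}(μ, μ) = 0`.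
-/

open MeasureTheory ENNReal
open scoped NNReal

/-- The Wasserstein-type distance associated with a cost `c : H × H → ℝ`:
the infimum over couplings `π` of `(μ, ν)` of `∫ c dπ`, valued in `[0,∞]`. -/
noncomputable def wassersteinCost {H : Type*} [MeasurableSpace H]
    (c : H × H → ℝ) (μ ν : Measure H) : ENNReal :=
  ⨅ π : {π : Measure (H × H) //
      IsProbabilityMeasure π ∧ π.map Prod.fst = μ ∧ π.map Prod.snd = ν},
    ∫⁻ p, ENNReal.ofReal (c p) ∂π.val

namespace ENNReal

theorem ofReal_sqrt_sq (x : ℝ) : ENNReal.ofReal √x ^ 2 = ENNReal.ofReal x := by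
  rw [← ofReal_pow (Real.sqrt_nonneg _), Real.sq_sqrt', ofReal_max, ofReal_zero, max_zero]

variable {α : Type*} [MeasurableSpace α] {μ : Measure α}

theorem sq_lintegral_mul_le {f g : α → ℝ≥0∞} (hf : AEMeasurable f μ) (hg : AEMeasurable g μ) :
    (∫⁻ a, f a * g a ∂μ) ^ 2 ≤ (∫⁻ a, f a ^ 2 ∂μ) * ∫⁻ a, g a ^ 2 ∂μ := by
  have hsq : ∀ x : ℝ≥0∞, (x ^ (1 / 2 : ℝ)) ^ 2 = x := fun x => by
    rw [← rpow_natCast, ← rpow_mul]; norm_num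
  have hcs := lintegral_mul_le_Lp_mul_Lq μ .two_two hf hg
  simp only [Pi.mul_apply, rpow_two] at hcs
  calc (∫⁻ a, f a * g a ∂μ) ^ 2
      ≤ ((∫⁻ a, f a ^ 2 ∂μ) ^ (1 / 2 : ℝ) * (∫⁻ a, g a ^ 2 ∂μ) ^ (1 / 2 : ℝ)) ^ 2 :=
        pow_le_pow_left₀ zero_le hcs 2
    _ = (∫⁻ a, f a ^ 2 ∂μ) * ∫⁻ a, g a ^ 2 ∂μ := by rw [mul_pow, hsq, hsq]

/-- Neither `f` nor `d` has to be measurable: a cost such as `‖p.1 - p.2‖` on `H × H` need not be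
measurable for the product σ-algebra when `H` is not separable. -/
theorem sq_lintegral_le_of_sq_le_mul {f d g : α → ℝ≥0∞} (hg : Measurable g)
    (hg₀ : ∀ a, g a ≠ 0) (hg_top : ∀ a, g a ≠ ∞) (hfdg : ∀ a, f a ^ 2 ≤ d a * g a) :
    (∫⁻ a, f a ∂μ) ^ 2 ≤ (∫⁻ a, d a ∂μ) * ∫⁻ a, g a ∂μ := by
  -- Cauchy–Schwarz for `h = (h / √g) * √g`, with `h ≤ f` measurable and of the same integral.
  obtain ⟨h, hh, hhf, hint⟩ := exists_measurable_le_lintegral_eq μ f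
  set s : α → ℝ≥0∞ := fun a => g a ^ (1 / 2 : ℝ)
  have hs_sq : ∀ a, s a ^ 2 = g a := fun a => by
    rw [← rpow_natCast, ← rpow_mul]; norm_num
  have hs₀ : ∀ a, s a ≠ 0 := fun a => by simp [s, hg₀ a]
  have hs_top : ∀ a, s a ≠ ∞ := fun a => by simp [s, hg_top a]
  have hhs_sq : ∀ a, (h a / s a) ^ 2 ≤ d a := fun a => by
    rw [div_eq_mul_inv, mul_pow, ← ENNReal.inv_pow, hs_sq, ← div_eq_mul_inv,
      ENNReal.div_le_iff_le_mul (.inl (hg₀ a)) (.inl (hg_top a))]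
    exact (pow_le_pow_left₀ zero_le (hhf a) 2).trans (hfdg a)
  calc (∫⁻ a, f a ∂μ) ^ 2 = (∫⁻ a, h a / s a * s a ∂μ) ^ 2 := by
        simp only [hint, ENNReal.div_mul_cancel (hs₀ _) (hs_top _)]
    _ ≤ (∫⁻ a, (h a / s a) ^ 2 ∂μ) * ∫⁻ a, s a ^ 2 ∂μ :=
        sq_lintegral_mul_le (hh.div (hg.pow_const _)).aemeasurable
          (hg.pow_const _).aemeasurable
    _ ≤ (∫⁻ a, d a ∂μ) * ∫⁻ a, g a ∂μ := by
        simp only [hs_sq]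
        gcongr with a
        exact hhs_sq a

end ENNReal

section Coupling

variable {X : Type*} [MeasurableSpace X] {μ ν : Measure X} {π : Measure (X × X)}

def IsCoupling (μ ν : Measure X) (π : Measure (X × X)) : Prop :=
  IsProbabilityMeasure π ∧ π.map Prod.fst = μ ∧ π.map Prod.snd = ν

theorem wassersteinCost_eq_iInf (c : X × X → ℝ) (μ ν : Measure X) :
    wassersteinCost c μ ν = ⨅ π : {π // IsCoupling μ ν π}, ∫⁻ p, ENNReal.ofReal (c p) ∂π.val :=
  rfl

theorem wassersteinCost_le_lintegral (c : X × X → ℝ) (hπ : IsCoupling μ ν π) :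
    wassersteinCost c μ ν ≤ ∫⁻ p, ENNReal.ofReal (c p) ∂π :=
  iInf_le (fun π : {π // IsCoupling μ ν π} => ∫⁻ p, ENNReal.ofReal (c p) ∂π.val) ⟨π, hπ⟩

theorem isCoupling_prod [IsProbabilityMeasure μ] [IsProbabilityMeasure ν] :
    IsCoupling μ ν (μ.prod ν) :=
  ⟨inferInstance, by simp, by simp⟩

theorem isCoupling_map_diag [IsProbabilityMeasure μ] :
    IsCoupling μ μ (μ.map fun x => (x, x)) := by
  have hdiag : Measurable fun x : X => (x, x) := measurable_id.prodMk measurable_id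
  refine ⟨Measure.isProbabilityMeasure_map hdiag.aemeasurable, ?_, ?_⟩
  · rw [Measure.map_map measurable_fst hdiag]; exact Measure.map_id
  · rw [Measure.map_map measurable_snd hdiag]; exact Measure.map_id

theorem IsCoupling.map_swap (hπ : IsCoupling μ ν π) : IsCoupling ν μ (π.map Prod.swap) := by
  obtain ⟨hprob, hfst, hsnd⟩ := hπ
  refine ⟨Measure.isProbabilityMeasure_map measurable_swap.aemeasurable, ?_, ?_⟩
  · rwa [Measure.map_map measurable_fst measurable_swap]
  · rwa [Measure.map_map measurable_snd measurable_swap]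

theorem IsCoupling.lintegral_comp_fst (hπ : IsCoupling μ ν π) {f : X → ℝ≥0∞} (hf : Measurable f) :
    ∫⁻ p, f p.1 ∂π = ∫⁻ x, f x ∂μ := by
  rw [← hπ.2.1, lintegral_map hf measurable_fst]

theorem IsCoupling.lintegral_comp_snd (hπ : IsCoupling μ ν π) {f : X → ℝ≥0∞} (hf : Measurable f) :
    ∫⁻ p, f p.2 ∂π = ∫⁻ x, f x ∂ν := by
  rw [← hπ.2.2, lintegral_map hf measurable_snd]

theorem wassersteinCost_comm {c : X × X → ℝ} (hc : ∀ x y, c (x, y) = c (y, x)) :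
    wassersteinCost c μ ν = wassersteinCost c ν μ := by
  suffices h : ∀ μ ν : Measure X, wassersteinCost c ν μ ≤ wassersteinCost c μ ν from
    le_antisymm (h ν μ) (h μ ν)
  intro μ ν
  rw [wassersteinCost_eq_iInf c μ ν]
  refine le_iInf fun π => (wassersteinCost_le_lintegral c π.2.map_swap).trans_eq ?_
  rw [show (Prod.swap : X × X → X × X) = MeasurableEquiv.prodComm from rfl,
    lintegral_map_equiv]
  exact lintegral_congr fun p => by rw [← hc]; rfl

theorem wassersteinCost_self_eq_zero {c : X × X → ℝ} (hc : ∀ x, c (x, x) ≤ 0)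
    [IsProbabilityMeasure μ] : wassersteinCost c μ μ = 0 := by
  refine le_antisymm ((wassersteinCost_le_lintegral c isCoupling_map_diag).trans ?_) zero_le
  refine (lintegral_map_le _ _).trans_eq ?_
  simp [ENNReal.ofReal_eq_zero.2 (hc _)]

theorem sq_wassersteinCost_le_mul [IsProbabilityMeasure μ] [IsProbabilityMeasure ν]
    {a b : X × X → ℝ} {C : ℝ≥0∞} (hC : C ≠ ∞)
    (h : ∀ π, IsCoupling μ ν π →
      (∫⁻ p, ENNReal.ofReal (a p) ∂π) ^ 2 ≤ (∫⁻ p, ENNReal.ofReal (b p) ∂π) * C) :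
    wassersteinCost a μ ν ^ 2 ≤ wassersteinCost b μ ν * C := by
  have : Nonempty {π // IsCoupling μ ν π} := ⟨⟨_, isCoupling_prod⟩⟩
  rw [wassersteinCost_eq_iInf b, iInf_mul (by simp [hC])]
  refine le_iInf fun π => ?_
  exact (pow_le_pow_left₀ zero_le (wassersteinCost_le_lintegral a π.2) 2).trans (h π π.2)

theorem lintegral_le_add_mul_wassersteinCost [IsProbabilityMeasure μ] [IsProbabilityMeasure ν]
    {c : X × X → ℝ} {f : X → ℝ≥0∞} (hf : Measurable f) {K : ℝ≥0∞} (hK : K ≠ ∞)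
    (hfc : ∀ x y, f x ≤ f y + K * ENNReal.ofReal (c (x, y))) :
    ∫⁻ x, f x ∂μ ≤ ∫⁻ x, f x ∂ν + K * wassersteinCost c μ ν := by
  have : Nonempty {π // IsCoupling μ ν π} := ⟨⟨_, isCoupling_prod⟩⟩
  rw [wassersteinCost_eq_iInf, mul_iInf (by simp [hK]), add_iInf]
  refine le_iInf fun ⟨π, hπ⟩ => ?_
  calc ∫⁻ x, f x ∂μ = ∫⁻ p, f p.1 ∂π := (hπ.lintegral_comp_fst hf).symm
    _ ≤ ∫⁻ p, f p.2 + K * ENNReal.ofReal (c p) ∂π := lintegral_mono fun p => hfc p.1 p.2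
    _ = ∫⁻ x, f x ∂ν + K * ∫⁻ p, ENNReal.ofReal (c p) ∂π := by
      rw [lintegral_add_left (f := fun p : X × X => f p.2) (hf.comp measurable_snd),
        lintegral_const_mul' _ _ hK, hπ.lintegral_comp_snd hf]

theorem sq_wassersteinCost_sqrt_mul_le [IsProbabilityMeasure μ] [IsProbabilityMeasure ν]
    (c : X × X → ℝ) {w : X → ℝ} (hw : Measurable w) (hw₀ : ∀ x, 0 ≤ w x)
    (hC : 1 + ∫⁻ x, ENNReal.ofReal (w x) ∂μ + ∫⁻ x, ENNReal.ofReal (w x) ∂ν ≠ ∞) :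
    wassersteinCost (fun p => √(c p * (1 + w p.1 + w p.2))) μ ν ^ 2 ≤
      wassersteinCost c μ ν *
        (1 + ∫⁻ x, ENNReal.ofReal (w x) ∂μ + ∫⁻ x, ENNReal.ofReal (w x) ∂ν) := by
  refine sq_wassersteinCost_le_mul hC fun π hπ => ?_
  have : IsProbabilityMeasure π := hπ.1
  set v : X → ℝ≥0∞ := fun x => ENNReal.ofReal (w x)
  have hv : Measurable v := ENNReal.measurable_ofReal.comp hw
  set g : X × X → ℝ≥0∞ := fun p => 1 + v p.1 + v p.2
  have hg_ofReal : ∀ p : X × X, ENNReal.ofReal (1 + w p.1 + w p.2) = g p := fun p => by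
    rw [ofReal_add (by linarith [hw₀ p.1]) (hw₀ p.2), ofReal_add zero_le_one (hw₀ p.1), ofReal_one]
  have hg_int : ∫⁻ p, g p ∂π = 1 + ∫⁻ x, v x ∂μ + ∫⁻ x, v x ∂ν := by
    simp only [g]
    rw [lintegral_add_right (g := fun p : X × X => v p.2) _ (hv.comp measurable_snd),
      lintegral_add_right (g := fun p : X × X => v p.1) _ (hv.comp measurable_fst),
      lintegral_const, measure_univ, one_mul, hπ.lintegral_comp_fst hv, hπ.lintegral_comp_snd hv]
  rw [← hg_int]
  refine sq_lintegral_le_of_sq_le_mul (by fun_prop) (fun p => by simp [g])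
    (fun p => by simp [g, v]) fun p => ?_
  rw [ofReal_sqrt_sq, ofReal_mul' (by linarith [hw₀ p.1, hw₀ p.2]), hg_ofReal]

end Coupling

section Metric

variable {X : Type*} [PseudoMetricSpace X]

theorem LipschitzWith.coe_le_add_mul_ofReal_min_dist_one {f : X → ℝ≥0} {K : ℝ≥0}
    (hf : LipschitzWith K f) (hf₁ : ∀ x, f x ≤ 1) (x y : X) :
    (f x : ℝ≥0∞) ≤ f y + (K + 1) * ENNReal.ofReal (min (dist x y) 1) := by
  have hreal : (f x : ℝ) ≤ f y + (K + 1) * min (dist x y) 1 := by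
    rcases le_total (dist x y) 1 with hxy | hxy
    · have hlip : (f x : ℝ) - f y ≤ K * dist x y :=
        (le_abs_self _).trans (hf.dist_le_mul x y)
      rw [min_eq_left hxy]
      nlinarith [dist_nonneg (x := x) (y := y)]
    · have hfx : (f x : ℝ) ≤ 1 := hf₁ x
      rw [min_eq_right hxy]
      linarith [(f y).2, K.2]
  have := ENNReal.ofReal_le_ofReal hreal
  rwa [ofReal_add (by positivity) (by positivity), ofReal_mul (by positivity),
    ofReal_coe_nnreal, ofReal_add (by positivity) zero_le_one, ofReal_coe_nnreal,
    ofReal_coe_nnreal, ofReal_one] at this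

variable [MeasurableSpace X] {μ ν : Measure X} [IsProbabilityMeasure μ] [IsProbabilityMeasure ν]

theorem lintegral_thickenedIndicator_le_of_wassersteinCost_eq_zero [OpensMeasurableSpace X]
    (h : wassersteinCost (fun p => min (dist p.1 p.2) 1) μ ν = 0) {δ : ℝ} (hδ : 0 < δ)
    (F : Set X) :
    ∫⁻ x, thickenedIndicator hδ F x ∂μ ≤ ∫⁻ x, thickenedIndicator hδ F x ∂ν := by
  simpa [h] using lintegral_le_add_mul_wassersteinCost (μ := μ) (ν := ν)
    (c := fun p : X × X => min (dist p.1 p.2) 1)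
    (thickenedIndicator hδ F).continuous.measurable.coe_nnreal_ennreal
    (add_ne_top.2 ⟨coe_ne_top, one_ne_top⟩)
    ((lipschitzWith_thickenedIndicator hδ F).coe_le_add_mul_ofReal_min_dist_one
      (thickenedIndicator_le_one hδ F))

theorem eq_of_wassersteinCost_min_dist_one_eq_zero [BorelSpace X]
    (h : wassersteinCost (fun p => min (dist p.1 p.2) 1) μ ν = 0) : μ = ν := by
  have h' : wassersteinCost (fun p => min (dist p.1 p.2) 1) ν μ = 0 :=
    (wassersteinCost_comm (c := fun p : X × X => min (dist p.1 p.2) 1)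
      fun x y => by rw [dist_comm]) ▸ h
  have hδ : ∀ n : ℕ, (0 : ℝ) < 1 / (n + 1) := fun _ => Nat.one_div_pos_of_nat
  refine ext_of_generate_finite _ (BorelSpace.measurable_eq.trans borel_eq_generateFrom_isClosed)
    isPiSystem_isClosed (fun F hF => ?_) (by simp)
  have hint : ∀ n,
      ∫⁻ x, thickenedIndicator (hδ n) F x ∂μ = ∫⁻ x, thickenedIndicator (hδ n) F x ∂ν :=
    fun n => le_antisymm (lintegral_thickenedIndicator_le_of_wassersteinCost_eq_zero h _ F)
      (lintegral_thickenedIndicator_le_of_wassersteinCost_eq_zero h' _ F)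
  have hlim (ρ : Measure X) [IsProbabilityMeasure ρ] :=
    tendsto_lintegral_thickenedIndicator_of_isClosed ρ hF hδ tendsto_one_div_add_atTop_nhds_zero_nat
  exact tendsto_nhds_unique (hlim μ) (by simpa only [hint] using hlim ν)

end Metric

theorem wasserstein_d0xi_le_general {H : Type*} [NormedAddCommGroup H]
    [MeasurableSpace H] [BorelSpace H] (ξ : ℝ)
    (μ ν : Measure H) [IsProbabilityMeasure μ] [IsProbabilityMeasure ν] :
    (wassersteinCost
        (fun p : H × H => Real.sqrt (min ‖p.1 - p.2‖ 1 *
          (1 + Real.exp (ξ * ‖p.1‖ ^ 2) + Real.exp (ξ * ‖p.2‖ ^ 2)))) μ ν) ^ 2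
      ≤ wassersteinCost (fun p : H × H => min ‖p.1 - p.2‖ 1) μ ν *
          (1 + (∫⁻ u, ENNReal.ofReal (Real.exp (ξ * ‖u‖ ^ 2)) ∂μ)
            + ∫⁻ u, ENNReal.ofReal (Real.exp (ξ * ‖u‖ ^ 2)) ∂ν) := by
  have hw : Measurable fun u : H => Real.exp (ξ * ‖u‖ ^ 2) := by fun_prop
  by_cases hC : 1 + ∫⁻ u, ENNReal.ofReal (Real.exp (ξ * ‖u‖ ^ 2)) ∂μ
      + ∫⁻ u, ENNReal.ofReal (Real.exp (ξ * ‖u‖ ^ 2)) ∂ν = ∞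
  · by_cases hW : wassersteinCost (fun p : H × H => min ‖p.1 - p.2‖ 1) μ ν = 0
    · simp_rw [← dist_eq_norm] at hW
      obtain rfl := eq_of_wassersteinCost_min_dist_one_eq_zero hW
      rw [wassersteinCost_self_eq_zero (by simp), zero_pow two_ne_zero]
      exact zero_le
    · rw [hC, mul_top hW]
      exact le_top
  · exact sq_wassersteinCost_sqrt_mul_le (fun p : H × H => min ‖p.1 - p.2‖ 1)
      (w := fun u => Real.exp (ξ * ‖u‖ ^ 2)) hw (fun _ => (Real.exp_pos _).le) hC

/-- Cauchy–Schwarz upgrade of Wasserstein distances: with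
`d₀(u,v) = min(‖u−v‖,1)` and
`d₀^ξ(u,v) = √(d₀(u,v)(1 + e^{ξ‖u‖²} + e^{ξ‖v‖²}))`, one has
`W_{d₀^ξ}(μ,ν)² ≤ W_{d₀}(μ,ν) (1 + ∫ e^{ξ‖u‖²} dμ + ∫ e^{ξ‖u‖²} dν)`. -/
theorem wasserstein_d0xi_le {H : Type*} [NormedAddCommGroup H]
    [MeasurableSpace H] [BorelSpace H] (ξ : ℝ) (hξ : 0 < ξ)
    (μ ν : Measure H) [IsProbabilityMeasure μ] [IsProbabilityMeasure ν] :
    (wassersteinCost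
        (fun p : H × H => Real.sqrt (min ‖p.1 - p.2‖ 1 *
          (1 + Real.exp (ξ * ‖p.1‖ ^ 2) + Real.exp (ξ * ‖p.2‖ ^ 2)))) μ ν) ^ 2
      ≤ wassersteinCost (fun p : H × H => min ‖p.1 - p.2‖ 1) μ ν *
          (1 + (∫⁻ u, ENNReal.ofReal (Real.exp (ξ * ‖u‖ ^ 2)) ∂μ)
            + ∫⁻ u, ENNReal.ofReal (Real.exp (ξ * ‖u‖ ^ 2)) ∂ν) :=
  wasserstein_d0xi_le_general ξ μ ν
end
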